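/- Let N ≥ 2 and let 2 ≤ i ≤ N. For any two vertices x, y of the hypercube graph H_N with Hamming distance h(x,y) = i − 2, the number of walks of length i from x to y equals Σ_{k=0}^{i−2} C(i−2, k) · k! · (N − (i−2−k)) · (i−k−1)!, and this quantity is at least i!. -/

import Mathlib

/-- The hypercube graph `H_N` on vertex set `{0,1}^N`: two binary strings are
adjacent iff their Hamming distance equals 1. -/
def hypercube (N : ℕ) : SimpleGraph (Fin N → Bool) where
  Adj x y := hammingDist x y = 1
  symm := by
    constructor
    intro x y h
    simpa [hammingDist_comm] using h
  loopless := by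
    constructor
    intro x h
    simp [hammingDist_self] at h

instance (N : ℕ) : DecidableRel (hypercube N).Adj := fun x y =>
  inferInstanceAs (Decidable (hammingDist x y = 1))

/-!
A step of a walk in `H_N` flips one coordinate. Seen from a target `y` at distance `d`, the
`d` coordinates where the current vertex differs from `y` bring it one step closer and the
other `N - d` one step farther, so walk counts depend only on the distance. Hence there are no
walks shorter than `d`, exactly `d!` of length `d`, and the counts `W m` of walks of length
`m + 2` at distance `m` satisfy `W (m + 1) = (m + 1) W m + (N - (m + 1)) (m + 2)!`, solved by
`W m = m! ∑_{j ≤ m} (j + 1) (N - j)`. For `m + 2 ≤ N` every factor `N - j` is at least `2`,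
which gives the bound `(m + 2)!`.
-/

open Finset
open scoped Nat

section FlipBit

variable {ι : Type*} [DecidableEq ι]

def flipBit (x : ι → Bool) (c : ι) : ι → Bool := Function.update x c (!x c)

@[simp] lemma flipBit_apply_self (x : ι → Bool) (c : ι) : flipBit x c c = !x c := by
  simp [flipBit]

@[simp] lemma flipBit_apply_of_ne (x : ι → Bool) {c d : ι} (h : d ≠ c) :
    flipBit x c d = x d := by
  simp [flipBit, h]

lemma flipBit_injective (x : ι → Bool) : Function.Injective (flipBit x) := by
  intro c d hcd
  by_contra hne
  have := congrFun hcd c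
  rw [flipBit_apply_self, flipBit_apply_of_ne x hne] at this
  exact Bool.not_ne_self _ this

variable [Fintype ι]

lemma hammingDist_flipBit_of_ne {x y : ι → Bool} {c : ι} (h : x c ≠ y c) :
    hammingDist (flipBit x c) y + 1 = hammingDist x y := by
  have hfilter : univ.filter (fun d => flipBit x c d ≠ y d) =
      (univ.filter fun d => x d ≠ y d).erase c := by
    ext d
    obtain rfl | hd := eq_or_ne d c
    · simp [Bool.eq_not.2 h.symm]
    · simp [hd]
  rw [hammingDist, hammingDist, hfilter, card_erase_add_one (by simpa using h)]

lemma hammingDist_flipBit_of_eq {x y : ι → Bool} {c : ι} (h : x c = y c) :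
    hammingDist (flipBit x c) y = hammingDist x y + 1 := by
  have hfilter : univ.filter (fun d => flipBit x c d ≠ y d) =
      insert c (univ.filter fun d => x d ≠ y d) := by
    ext d
    obtain rfl | hd := eq_or_ne d c
    · simp [h]
    · simp [hd]
  rw [hammingDist, hammingDist, hfilter, card_insert_of_notMem (by simp [h])]

lemma hammingDist_flipBit_self (x : ι → Bool) (c : ι) : hammingDist x (flipBit x c) = 1 := by
  rw [hammingDist_comm, hammingDist_flipBit_of_eq rfl, hammingDist_self]

lemma exists_eq_flipBit_of_hammingDist_eq_one {x z : ι → Bool} (h : hammingDist x z = 1) :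
    ∃ c, z = flipBit x c := by
  obtain ⟨c, hc⟩ := card_eq_one.1 h
  refine ⟨c, funext fun d => ?_⟩
  have hd := congrArg (d ∈ ·) hc
  simp only [mem_filter, mem_univ, true_and, mem_singleton, eq_iff_iff] at hd
  obtain rfl | hdc := eq_or_ne d c
  · rw [flipBit_apply_self, Bool.eq_not]
    exact fun hxz => hd.2 rfl (hxz.symm)
  · rw [flipBit_apply_of_ne x hdc]
    exact (not_not.1 (mt hd.1 hdc)).symm

end FlipBit

variable {N : ℕ}

lemma hypercube_neighborFinset (x : Fin N → Bool) :
    (hypercube N).neighborFinset x = univ.image (flipBit x) := by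
  ext z
  simp only [SimpleGraph.mem_neighborFinset, mem_image, mem_univ, true_and]
  refine ⟨fun h => ?_, ?_⟩
  · obtain ⟨c, rfl⟩ := exists_eq_flipBit_of_hammingDist_eq_one h
    exact ⟨c, rfl⟩
  · rintro ⟨c, rfl⟩
    exact hammingDist_flipBit_self x c

lemma hypercube_adjMatrix_pow_succ_apply (n : ℕ) (x y : Fin N → Bool) :
    (SimpleGraph.adjMatrix ℕ (hypercube N) ^ (n + 1)) x y =
      ∑ c, (SimpleGraph.adjMatrix ℕ (hypercube N) ^ n) (flipBit x c) y := by
  rw [pow_succ', SimpleGraph.adjMatrix_mul_apply, hypercube_neighborFinset,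
    sum_image fun c _ d _ h => flipBit_injective x h]

lemma hypercube_adjMatrix_pow_succ_apply_of_flipBit {n a b : ℕ} {x y : Fin N → Bool}
    (ha : ∀ c, x c ≠ y c → (SimpleGraph.adjMatrix ℕ (hypercube N) ^ n) (flipBit x c) y = a)
    (hb : ∀ c, x c = y c → (SimpleGraph.adjMatrix ℕ (hypercube N) ^ n) (flipBit x c) y = b) :
    (SimpleGraph.adjMatrix ℕ (hypercube N) ^ (n + 1)) x y =
      hammingDist x y * a + (N - hammingDist x y) * b := by
  have hcard : #{c | ¬x c ≠ y c} = N - hammingDist x y := by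
    have := card_filter_add_card_filter_not (s := univ) (fun c : Fin N => x c ≠ y c)
    rw [card_univ, Fintype.card_fin] at this
    rw [hammingDist]
    omega
  rw [hypercube_adjMatrix_pow_succ_apply,
    ← sum_filter_add_sum_filter_not univ (fun c => x c ≠ y c),
    sum_congr rfl fun c hc => ha c (mem_filter.1 hc).2,
    sum_congr rfl fun c hc => hb c (not_not.1 (mem_filter.1 hc).2),
    sum_const, sum_const, hcard, smul_eq_mul, smul_eq_mul, hammingDist]

lemma hypercube_adjMatrix_pow_apply_of_lt_hammingDist {n : ℕ} {x y : Fin N → Bool}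
    (h : n < hammingDist x y) : (SimpleGraph.adjMatrix ℕ (hypercube N) ^ n) x y = 0 := by
  induction n generalizing x with
  | zero => simp [Matrix.one_apply_ne (hammingDist_pos.1 h)]
  | succ n ih =>
    rw [hypercube_adjMatrix_pow_succ_apply]
    refine sum_eq_zero fun c _ => ih ?_
    obtain hc | hc := eq_or_ne (x c) (y c)
    · rw [hammingDist_flipBit_of_eq hc]; omega
    · have := hammingDist_flipBit_of_ne hc; omega

lemma hypercube_adjMatrix_pow_apply_of_hammingDist_eq {n : ℕ} {x y : Fin N → Bool}
    (h : hammingDist x y = n) : (SimpleGraph.adjMatrix ℕ (hypercube N) ^ n) x y = n ! := by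
  induction n generalizing x with
  | zero => simp [hammingDist_eq_zero.1 h]
  | succ n ih =>
    rw [hypercube_adjMatrix_pow_succ_apply_of_flipBit (a := n !) (b := 0)
      (fun c hc => ih (by have := hammingDist_flipBit_of_ne hc; omega))
      (fun c hc => hypercube_adjMatrix_pow_apply_of_lt_hammingDist
        (by rw [hammingDist_flipBit_of_eq hc]; omega)), h, Nat.factorial_succ]
    ring

lemma hypercube_adjMatrix_pow_add_two_apply {m : ℕ} {x y : Fin N → Bool}
    (h : hammingDist x y = m) :
    (SimpleGraph.adjMatrix ℕ (hypercube N) ^ (m + 2)) x y =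
      m ! * ∑ j ∈ range (m + 1), (j + 1) * (N - j) := by
  induction m generalizing x with
  | zero =>
    rw [hypercube_adjMatrix_pow_succ_apply_of_flipBit (a := 0) (b := 1)
      (fun c hc => absurd (congrFun (hammingDist_eq_zero.1 h) c) hc)
      (fun c hc => hypercube_adjMatrix_pow_apply_of_hammingDist_eq
        (by rw [hammingDist_flipBit_of_eq hc, h])), h]
    simp
  | succ m ih =>
    rw [hypercube_adjMatrix_pow_succ_apply_of_flipBit
      (fun c hc => ih (by have := hammingDist_flipBit_of_ne hc; omega))
      (fun c hc => hypercube_adjMatrix_pow_apply_of_hammingDist_eq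
        (by rw [hammingDist_flipBit_of_eq hc, h])), h,
      sum_range_succ _ (m + 1), Nat.factorial_succ (m + 1), Nat.factorial_succ m]
    ring

lemma sum_choose_mul_factorial_mul_sub_mul_factorial (N m : ℕ) :
    ∑ k ∈ range (m + 1), m.choose k * k ! * (N - (m - k)) * (m + 1 - k)! =
      m ! * ∑ j ∈ range (m + 1), (j + 1) * (N - j) := by
  conv_rhs => rw [← sum_range_reflect, mul_sum]
  refine sum_congr rfl fun k hk => ?_
  have hkm : k ≤ m := Nat.lt_succ_iff.1 (mem_range.1 hk)
  rw [show m + 1 - 1 - k = m - k by omega, show m + 1 - k = m - k + 1 by omega,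
    Nat.factorial_succ, ← Nat.choose_mul_factorial_mul_factorial hkm]
  ring

lemma mul_le_sum_range_succ_mul_sub {N m : ℕ} (h : m + 2 ≤ N) :
    (m + 2) * (m + 1) ≤ ∑ j ∈ range (m + 1), (j + 1) * (N - j) := by
  induction m with
  | zero => simpa using h
  | succ m ih =>
    rw [sum_range_succ]
    have : 2 ≤ N - (m + 1) := by omega
    nlinarith [ih (by omega)]

theorem stmt15_general (N : ℕ) (i : ℕ) (hi2 : 2 ≤ i) (hiN : i ≤ N)
    (x y : Fin N → Bool) (hxy : hammingDist x y = i - 2) :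
    ((SimpleGraph.adjMatrix ℕ (hypercube N)) ^ i) x y =
      ∑ k ∈ Finset.range (i - 1),
        Nat.choose (i - 2) k * Nat.factorial k * (N - (i - 2 - k)) *
          Nat.factorial (i - k - 1) ∧
    Nat.factorial i ≤ ((SimpleGraph.adjMatrix ℕ (hypercube N)) ^ i) x y := by
  obtain ⟨m, rfl⟩ : ∃ m, i = m + 2 := ⟨i - 2, by omega⟩
  rw [Nat.add_sub_cancel] at hxy
  rw [hypercube_adjMatrix_pow_add_two_apply hxy]
  refine ⟨?_, ?_⟩
  · rw [← sum_choose_mul_factorial_mul_sub_mul_factorial, Nat.add_sub_cancel]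
    exact sum_congr rfl fun k _ => by rw [show m + 2 - k - 1 = m + 1 - k by omega]
  · calc (m + 2)! = m ! * ((m + 2) * (m + 1)) := by
          rw [Nat.factorial_succ, Nat.factorial_succ]; ring
      _ ≤ m ! * ∑ j ∈ range (m + 1), (j + 1) * (N - j) :=
          Nat.mul_le_mul_left _ (mul_le_sum_range_succ_mul_sub hiN)

/-- For `2 ≤ i ≤ N` and vertices `x, y` of the hypercube `H_N` at Hamming
distance `i − 2`, the number of walks of length `i` from `x` to `y` (the
`(x,y)` entry of `A_N^i`) equals
`Σ_{k=0}^{i−2} C(i−2,k)·k!·(N−(i−2−k))·(i−k−1)!`, and this quantity is at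
least `i!`. -/
theorem stmt15 (N : ℕ) (hN : 2 ≤ N) (i : ℕ) (hi2 : 2 ≤ i) (hiN : i ≤ N)
    (x y : Fin N → Bool) (hxy : hammingDist x y = i - 2) :
    ((SimpleGraph.adjMatrix ℕ (hypercube N)) ^ i) x y =
      ∑ k ∈ Finset.range (i - 1),
        Nat.choose (i - 2) k * Nat.factorial k * (N - (i - 2 - k)) *
          Nat.factorial (i - k - 1) ∧
    Nat.factorial i ≤ ((SimpleGraph.adjMatrix ℕ (hypercube N)) ^ i) x y :=
  stmt15_general N i hi2 hiN x y hxy
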